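/- arXiv:2503.20489 — 4 statements merged into one kernel-verified Lean document; each statement's English description precedes it below -/
import Mathlib

section
/- If a probability kernel R satisfies self-reversibility (for ν-a.e. x, R_y(dz)R_x(dy) = R_z(dy)R_x(dz) as measures on X²) and stationarity with respect to the restriction ν_{σ(R)} (∫ R_x(A) ν(dx) = ν(A) for all A ∈ σ(R)), then R is a.e. total on the atoms of σ(R): ν({x : R_x([x]_{σ(R)}) = 1}) = 1. -/
open MeasureTheory

/-- The σ-algebra generated by a probability kernel `R`. -/
def kernelSigma {X : Type*} [mX : MeasurableSpace X] (R : X → Measure X) : MeasurableSpace X :=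
  ⨆ (B : Set X) (_ : MeasurableSet B), MeasurableSpace.comap (fun x => R x B) inferInstance

/-- The atom of `x` in a σ-algebra `m`. -/
def atomOf {X : Type*} (m : MeasurableSpace X) (x : X) : Set X :=
  ⋂₀ {A | m.MeasurableSet' A ∧ x ∈ A}

/-- `R` is a regular conditional distribution for `ν` given the sub-σ-algebra `G`
(all relative to the ambient σ-algebra `mX`). -/
def IsRCD {X : Type*} [mX : MeasurableSpace X] (ν : Measure X) (R : X → Measure X)
    (G : MeasurableSpace X) : Prop :=
  (∀ B : Set X, MeasurableSet B → Measurable[G] fun x => R x B) ∧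
  (∀ A B : Set X, G.MeasurableSet' A → MeasurableSet B →
    ∫⁻ x in A, R x B ∂ν = ν (A ∩ B))

/-- `G` is countably generated under `ν`. -/
def CGUnder {X : Type*} [mX : MeasurableSpace X] (ν : Measure X)
    (G : MeasurableSpace X) : Prop :=
  ∃ C : Set X, G.MeasurableSet' C ∧ ν C = 1 ∧
    @MeasurableSpace.CountablyGenerated C (G.comap Subtype.val)

section Aux
open ProbabilityTheory


private lemma amgm_le' {a b : ENNReal} (ha : a ≤ 1) (hb : b ≤ 1) :
    2 * a * b ≤ a * a + b * b := by
  lift a to NNReal using (ha.trans_lt ENNReal.one_lt_top).ne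
  lift b to NNReal using (hb.trans_lt ENNReal.one_lt_top).ne
  have : (2 : ENNReal) = ((2 : NNReal) : ENNReal) := by norm_cast
  rw [this, ← ENNReal.coe_mul, ← ENNReal.coe_mul, ← ENNReal.coe_mul, ← ENNReal.coe_mul,
    ← ENNReal.coe_add, ENNReal.coe_le_coe, ← NNReal.coe_le_coe]
  push_cast
  nlinarith [sq_nonneg ((a : ℝ) - b)]

private lemma amgm_eq' {a b : ENNReal} (ha : a ≤ 1) (hb : b ≤ 1)
    (h : 2 * a * b = a * a + b * b) : a = b := by
  lift a to NNReal using (ha.trans_lt ENNReal.one_lt_top).ne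
  lift b to NNReal using (hb.trans_lt ENNReal.one_lt_top).ne
  have h2 : (2 : ENNReal) = ((2 : NNReal) : ENNReal) := by norm_cast
  rw [h2, ← ENNReal.coe_mul, ← ENNReal.coe_mul, ← ENNReal.coe_mul, ← ENNReal.coe_mul,
    ← ENNReal.coe_add, ENNReal.coe_inj] at h
  have h3 : ((2 : NNReal) : ℝ) * a * b = (a : ℝ) * a + b * b := by exact_mod_cast congrArg NNReal.toReal h
  have h4 : ((a : ℝ) - b) ^ 2 = 0 := by push_cast at h3 ⊢; nlinarith
  have h5 : (a : ℝ) = b := by nlinarith [sq_nonneg ((a:ℝ) - b)]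
  exact_mod_cast h5

lemma kernelSigma_le {X : Type*} [mX : MeasurableSpace X] (R : X → Measure X)
    (hRm : ∀ B : Set X, MeasurableSet B → Measurable fun x => R x B) :
    kernelSigma R ≤ mX :=
  iSup₂_le fun B hB => measurable_iff_comap_le.mp (hRm B hB)

lemma measurable_kernelSigma {X : Type*} [mX : MeasurableSpace X] (R : X → Measure X)
    {B : Set X} (hB : MeasurableSet B) :
    Measurable[kernelSigma R] fun x => R x B :=
  measurable_iff_comap_le.mpr
    (le_iSup₂_of_le B hB le_rfl)

lemma stat_fun {X : Type*} [mX : MeasurableSpace X] (ν : Measure X)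
    (R : X → Measure X) (hRp : ∀ x, IsProbabilityMeasure (R x))
    (hRm : ∀ B : Set X, MeasurableSet B → Measurable fun x => R x B)
    (hS : ∀ A : Set X, (kernelSigma R).MeasurableSet' A → ∫⁻ x, R x A ∂ν = ν A)
    {h : X → ENNReal} (hh : Measurable[kernelSigma R] h) :
    ∫⁻ x, ∫⁻ z, h z ∂(R x) ∂ν = ∫⁻ x, h x ∂ν := by
  have hle : kernelSigma R ≤ mX := kernelSigma_le R hRm
  let κ : Kernel X X := ⟨R, Measure.measurable_of_measurable_coe R hRm⟩
  haveI : IsMarkovKernel κ := ⟨hRp⟩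
  refine @Measurable.ennreal_induction X (kernelSigma R)
    (fun h => ∫⁻ x, ∫⁻ z, h z ∂(R x) ∂ν = ∫⁻ x, h x ∂ν) ?_ ?_ ?_ h hh
  · intro c s hs
    have hs' : MeasurableSet s := hle s hs
    simp only [lintegral_indicator_const hs']
    rw [lintegral_const_mul c (hRm s hs'), hS s hs]
  · intro f g _ hf hg Pf Pg
    have hf' : Measurable f := hf.mono hle le_rfl
    have hg' : Measurable g := hg.mono hle le_rfl
    have h1 : ∀ x, ∫⁻ z, f z + g z ∂(R x) = (∫⁻ z, f z ∂(R x)) + ∫⁻ z, g z ∂(R x) :=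
      fun x => lintegral_add_left hf' _
    have mf : Measurable fun x => ∫⁻ z, f z ∂(R x) := Measurable.lintegral_kernel (κ := κ) hf'
    simp only [Pi.add_apply, h1]
    rw [lintegral_add_left mf, Pf, Pg, lintegral_add_left hf']
  · intro f hfm hmono hP
    have hfm' : ∀ n, Measurable (f n) := fun n => (hfm n).mono hle le_rfl
    have h1 : ∀ x, ∫⁻ z, ⨆ n, f n z ∂(R x) = ⨆ n, ∫⁻ z, f n z ∂(R x) :=
      fun x => lintegral_iSup hfm' (fun i j hij z => hmono hij z)
    simp only [h1]
    have mf : ∀ n, Measurable fun x => ∫⁻ z, f n z ∂(R x) :=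
      fun n => Measurable.lintegral_kernel (κ := κ) (hfm' n)
    rw [lintegral_iSup mf (fun i j hij x => lintegral_mono (hmono hij)),
      lintegral_iSup hfm' (fun i j hij x => hmono hij x)]
    simp only [hP]

lemma key_lemma {X : Type*} [mX : MeasurableSpace X] (ν : Measure X)
    [IsProbabilityMeasure ν]
    (R : X → Measure X) (hRp : ∀ x, IsProbabilityMeasure (R x))
    (hRm : ∀ B : Set X, MeasurableSet B → Measurable fun x => R x B)
    (hSR : ∀ᵐ x ∂ν, ∀ f : X → X → ENNReal, Measurable (Function.uncurry f) →
      ∫⁻ y, ∫⁻ z, f y z ∂(R y) ∂(R x) = ∫⁻ y, ∫⁻ z, f z y ∂(R y) ∂(R x))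
    (hS : ∀ A : Set X, (kernelSigma R).MeasurableSet' A → ∫⁻ x, R x A ∂ν = ν A)
    {B : Set X} (hB : MeasurableSet B) :
    ∀ᵐ x ∂ν, R x {y | R y B = R x B} = 1 := by
  classical
  let κ : Kernel X X := ⟨R, Measure.measurable_of_measurable_coe R hRm⟩
  haveI : IsMarkovKernel κ := ⟨hRp⟩
  set g : X → ENNReal := fun x => R x B with hgdef
  have hg : Measurable g := hRm B hB
  have hg1 : ∀ w, g w ≤ 1 := fun w => by haveI := hRp w; exact prob_le_one
  -- Step 1: harmonicity a.e.
  have h1ae : ∀ᵐ x ∂ν, ∫⁻ y, g y ∂(R x) = g x := by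
    filter_upwards [hSR] with x hx
    have hfm : Measurable (Function.uncurry fun (_ z : X) => B.indicator (1 : X → ENNReal) z) :=
      (measurable_one.indicator hB).comp measurable_snd
    have h1 := hx (fun _ z => B.indicator 1 z) hfm
    have hL : ∀ w : X, ∫⁻ z, B.indicator 1 z ∂(R w) = R w B := fun w => lintegral_indicator_one hB
    have hRc : ∀ w y : X, ∫⁻ _z, B.indicator (1 : X → ENNReal) y ∂(R w) = B.indicator 1 y :=
      fun w y => by haveI := hRp w; simp [lintegral_const]
    simp only [hRc, hL] at h1
    exact h1
  -- Step 2: stationarity of g²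
  have hstat2 : ∫⁻ x, ∫⁻ y, g y * g y ∂(R x) ∂ν = ∫⁻ x, g x * g x ∂ν :=
    stat_fun ν R hRp hRm hS ((measurable_kernelSigma R hB).mul (measurable_kernelSigma R hB))
  -- integrals of S and D over ν agree and are finite
  have hSval : ∀ᵐ x ∂ν, ∫⁻ y, (2 * g x) * g y ∂(R x) = 2 * (g x * g x) := by
    filter_upwards [h1ae] with x hx
    rw [lintegral_const_mul _ hg, hx, mul_assoc]
  have hSint : ∫⁻ x, ∫⁻ y, (2 * g x) * g y ∂(R x) ∂ν = 2 * ∫⁻ x, g x * g x ∂ν := by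
    rw [lintegral_congr_ae hSval, lintegral_const_mul 2 (show Measurable fun x => g x * g x from hg.mul hg)]
  have hDval : ∀ x : X, ∫⁻ y, g x * g x + g y * g y ∂(R x)
      = g x * g x + ∫⁻ y, g y * g y ∂(R x) := by
    intro x
    haveI := hRp x
    rw [lintegral_add_left measurable_const, lintegral_const, measure_univ, mul_one]
  have hDint : ∫⁻ x, ∫⁻ y, g x * g x + g y * g y ∂(R x) ∂ν = 2 * ∫⁻ x, g x * g x ∂ν := by
    simp only [hDval]
    rw [lintegral_add_left (show Measurable fun x => g x * g x from hg.mul hg), hstat2, two_mul]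
  have hgg_le : ∫⁻ x, g x * g x ∂ν ≤ 1 := by
    calc ∫⁻ x, g x * g x ∂ν ≤ ∫⁻ _x, 1 ∂ν :=
          lintegral_mono fun x => mul_le_one' (hg1 x) (hg1 x)
      _ = 1 := by simp
  have hfinS : ∫⁻ x, ∫⁻ y, (2 * g x) * g y ∂(R x) ∂ν ≠ ⊤ := by
    rw [hSint]
    exact ENNReal.mul_ne_top (by norm_num) (hgg_le.trans_lt ENNReal.one_lt_top).ne
  have hSle : ∀ x, ∫⁻ y, (2 * g x) * g y ∂(R x) ≤ ∫⁻ y, g x * g x + g y * g y ∂(R x) :=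
    fun x => lintegral_mono fun y => amgm_le' (hg1 x) (hg1 y)
  have hDmeas : Measurable fun x => ∫⁻ y, g x * g x + g y * g y ∂(R x) := by
    have hu : Measurable (Function.uncurry fun x y : X => g x * g x + g y * g y) :=
      ((hg.comp measurable_fst).mul (hg.comp measurable_fst)).add
        ((hg.comp measurable_snd).mul (hg.comp measurable_snd))
    exact Measurable.lintegral_kernel_prod_right (κ := κ) hu
  have hae1 : (fun x => ∫⁻ y, (2 * g x) * g y ∂(R x))
      =ᵐ[ν] fun x => ∫⁻ y, g x * g x + g y * g y ∂(R x) :=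
    ae_eq_of_ae_le_of_lintegral_le (Filter.Eventually.of_forall hSle) hfinS
      hDmeas.aemeasurable (hDint.trans hSint.symm).le
  -- conclude pointwise concentration
  filter_upwards [hae1, hSval] with x hSD hSx
  haveI := hRp x
  have hfin' : ∫⁻ y, (2 * g x) * g y ∂(R x) ≠ ⊤ := by
    rw [hSx]
    exact ENNReal.mul_ne_top (by norm_num)
      ((mul_le_one' (hg1 x) (hg1 x)).trans_lt ENNReal.one_lt_top).ne
  have h2 : (fun y => (2 * g x) * g y) =ᵐ[R x] fun y => g x * g x + g y * g y :=
    ae_eq_of_ae_le_of_lintegral_le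
      (Filter.Eventually.of_forall fun y => amgm_le' (hg1 x) (hg1 y))
      hfin' (measurable_const.add (hg.mul hg)).aemeasurable hSD.ge
  have h3 : ∀ᵐ y ∂(R x), g y = g x := by
    filter_upwards [h2] with y hy
    exact (amgm_eq' (hg1 x) (hg1 y) hy).symm
  have hms : MeasurableSet {y | g y = g x} := hg (measurableSet_singleton (g x))
  have hcompl : R x {y | g y = g x}ᶜ = 0 := by
    have h4 := ae_iff.mp h3
    simpa [Set.compl_setOf] using h4
  exact (prob_compl_eq_zero_iff hms).mp hcompl

def invariantSigma {X : Type*} [MeasurableSpace X] (R : X → Measure X) : MeasurableSpace X where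
  MeasurableSet' := fun A => ∀ u v : X, R u = R v → (u ∈ A ↔ v ∈ A)
  measurableSet_empty := by simp
  measurableSet_compl := fun A hA u v huv => by
    simp only [Set.mem_compl_iff]
    exact not_congr (hA u v huv)
  measurableSet_iUnion := fun f hf u v huv => by
    simp only [Set.mem_iUnion]
    exact exists_congr fun i => hf i u v huv

lemma kernelSigma_invariant {X : Type*} [mX : MeasurableSpace X] (R : X → Measure X)
    {A : Set X} (hA : (kernelSigma R).MeasurableSet' A) {u v : X} (huv : R u = R v)
    (hu : u ∈ A) : v ∈ A := by
  have hle : kernelSigma R ≤ invariantSigma R := by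
    refine iSup₂_le fun B hB => ?_
    intro A hA
    obtain ⟨S, -, rfl⟩ := hA
    intro u v huv
    simp only [Set.mem_preimage, huv]
  exact (hle A hA u v huv).mp hu


end Aux

open ProbabilityTheory in
theorem stmt11 {X : Type*} [mX : MeasurableSpace X] [StandardBorelSpace X]
    (ν : Measure X) [IsProbabilityMeasure ν]
    (R : X → Measure X) (hRp : ∀ x, IsProbabilityMeasure (R x))
    (hRm : ∀ B : Set X, MeasurableSet B → Measurable fun x => R x B)
    (hSR : ∀ᵐ x ∂ν, ∀ f : X → X → ENNReal, Measurable (Function.uncurry f) →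
      ∫⁻ y, ∫⁻ z, f y z ∂(R y) ∂(R x) = ∫⁻ y, ∫⁻ z, f z y ∂(R y) ∂(R x))
    (hS : ∀ A : Set X, (kernelSigma R).MeasurableSet' A → ∫⁻ x, R x A ∂ν = ν A) :
    ν {x | R x (atomOf (kernelSigma R) x) = 1} = 1 := by
  classical
  -- countable π-system generating mX
  let s : ℕ → Set X := MeasurableSpace.natGeneratingSequence X
  have hsm : ∀ n, MeasurableSet (s n) := MeasurableSpace.measurableSet_natGeneratingSequence
  let T : Finset ℕ → Set X := fun F => ⋂ i ∈ F, s i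
  have hTm : ∀ F, MeasurableSet (T F) := fun F => Finset.measurableSet_biInter F fun i _ => hsm i
  have hTunion : ∀ F F' : Finset ℕ, T (F ∪ F') = T F ∩ T F' := by
    intro F F'
    simp only [T, Finset.mem_union, Set.iInter_or, Set.iInter_inter_distrib]
  have hTsingle : ∀ n, T {n} = s n := fun n => by simp [T]
  have hgen : mX = MeasurableSpace.generateFrom (Set.range T) := by
    refine le_antisymm ?_ (MeasurableSpace.generateFrom_le ?_)
    · conv_lhs => rw [← MeasurableSpace.generateFrom_natGeneratingSequence X]
      refine MeasurableSpace.generateFrom_le fun t ht => ?_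
      obtain ⟨n, rfl⟩ := ht
      exact MeasurableSpace.measurableSet_generateFrom ⟨{n}, hTsingle n⟩
    · rintro t ⟨F, rfl⟩
      exact hTm F
  have hPi : IsPiSystem (Set.range T) := by
    rintro a ⟨F, rfl⟩ b ⟨F', rfl⟩ -
    exact ⟨F ∪ F', hTunion F F'⟩
  -- a.e. concentration on each generator
  have hAll : ∀ᵐ x ∂ν, ∀ F : Finset ℕ, R x {y | R y (T F) = R x (T F)} = 1 :=
    ae_all_iff.mpr fun F => key_lemma ν R hRp hRm hSR hS (hTm F)
  have hae : ∀ᵐ x ∂ν, R x (atomOf (kernelSigma R) x) = 1 := by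
    filter_upwards [hAll] with x hx
    haveI := hRp x
    set E : Set X := ⋂ F : Finset ℕ, {y | R y (T F) = R x (T F)} with hEdef
    have hEm : MeasurableSet E :=
      MeasurableSet.iInter fun F => (hRm (T F) (hTm F)) (measurableSet_singleton _)
    have hE1 : R x E = 1 := by
      rw [← prob_compl_eq_zero_iff hEm, hEdef, Set.compl_iInter]
      refine measure_iUnion_null_iff.mpr fun F => ?_
      have hm : MeasurableSet {y | R y (T F) = R x (T F)} :=
        (hRm (T F) (hTm F)) (measurableSet_singleton _)
      exact (prob_compl_eq_zero_iff hm).mpr (hx F)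
    have hsub : E ⊆ atomOf (kernelSigma R) x := by
      intro y hy
      have hy' : ∀ F, R y (T F) = R x (T F) := by
        simpa [hEdef, Set.mem_iInter] using hy
      haveI := hRp y
      have hRyx : R y = R x := by
        refine ext_of_generate_finite (Set.range T) hgen hPi ?_ ?_
        · rintro t ⟨F, rfl⟩
          exact hy' F
        · rw [measure_univ, measure_univ]
      intro A hA
      exact kernelSigma_invariant R hA.1 hRyx.symm hA.2
    refine le_antisymm prob_le_one ?_
    calc (1 : ENNReal) = R x E := hE1.symm
      _ ≤ R x (atomOf (kernelSigma R) x) := measure_mono hsub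
  -- conclude
  have hzero : ν {x | ¬ R x (atomOf (kernelSigma R) x) = 1} = 0 := ae_iff.mp hae
  refine le_antisymm prob_le_one ?_
  have hsplit : (Set.univ : Set X) ⊆
      {x | R x (atomOf (kernelSigma R) x) = 1} ∪ {x | ¬ R x (atomOf (kernelSigma R) x) = 1} := by
    intro x _
    by_cases h : R x (atomOf (kernelSigma R) x) = 1
    · exact Or.inl h
    · exact Or.inr h
  calc (1 : ENNReal) = ν Set.univ := measure_univ.symm
    _ ≤ ν ({x | R x (atomOf (kernelSigma R) x) = 1} ∪ {x | ¬ R x (atomOf (kernelSigma R) x) = 1}) :=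
        measure_mono hsplit
    _ ≤ ν {x | R x (atomOf (kernelSigma R) x) = 1} + ν {x | ¬ R x (atomOf (kernelSigma R) x) = 1} :=
        measure_union_le _ _
    _ = ν {x | R x (atomOf (kernelSigma R) x) = 1} := by rw [hzero, add_zero]
end

section
/- If a probability kernel R satisfies a.e. totality with respect to σ(R) (there is G ∈ σ(R), ν(G)=1, with R_x([x]_{σ(R)}) = 1 for all x ∈ G), then R is self-reversible: for all x ∈ G, the measure R_y(dz)R_x(dy) on X² is symmetric, i.e., ∫_B R_y(A) R_x(dy) = ∫_A R_y(B) R_x(dy) for all A, B ∈ 𝒳. -/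
open MeasureTheory

theorem stmt12 {X : Type*} [mX : MeasurableSpace X] [StandardBorelSpace X]
    (ν : Measure X) [IsProbabilityMeasure ν]
    (R : X → Measure X) (hRp : ∀ x, IsProbabilityMeasure (R x))
    (hRm : ∀ B : Set X, MeasurableSet B → Measurable fun x => R x B)
    (G : Set X) (hG : (kernelSigma R).MeasurableSet' G) (hνG : ν G = 1)
    (htot : ∀ x ∈ G, R x (atomOf (kernelSigma R) x) = 1) :
    ∀ x ∈ G, ∀ A B : Set X, MeasurableSet A → MeasurableSet B →
      ∫⁻ y in B, R y A ∂(R x) = ∫⁻ y in A, R y B ∂(R x) := by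
  intro x hx A B hA hB
  haveI := hRp x
  have hle : kernelSigma R ≤ mX :=
    iSup₂_le fun C hC => MeasurableSpace.comap_le_iff_le_map.mpr (hRm C hC)
  have key : ∀ C : Set X, MeasurableSet C → ∀ᵐ y ∂(R x), R y C = R x C := by
    intro C hC
    set T := {y | R y C = R x C} with hT
    have hTG : (kernelSigma R).MeasurableSet' T := by
      have h1 : MeasurableSet[MeasurableSpace.comap (fun y => R y C) inferInstance] T :=
        ⟨{R x C}, measurableSet_singleton _, rfl⟩
      exact (le_iSup₂ (f := fun (B : Set X) (_ : MeasurableSet B) =>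
        MeasurableSpace.comap (fun x => R x B) inferInstance) C hC) T h1
    have hTm : MeasurableSet T := hle T hTG
    have hsub : atomOf (kernelSigma R) x ⊆ T := fun y hy => hy T ⟨hTG, rfl⟩
    have h1 : (1 : ENNReal) ≤ R x T := (htot x hx) ▸ measure_mono hsub
    have hT1 : R x T = 1 := le_antisymm prob_le_one h1
    have : R x Tᶜ = 0 := by
      rw [measure_compl hTm (measure_ne_top _ _), hT1, measure_univ, tsub_self]
    filter_upwards [measure_eq_zero_iff_ae_notMem.mp this] with y hy
    simpa [hT, Set.mem_setOf_eq] using hy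
  have hAe := (key A hA)
  have hBe := (key B hB)
  calc ∫⁻ y in B, R y A ∂(R x) = ∫⁻ y in B, R x A ∂(R x) :=
        lintegral_congr_ae (ae_restrict_of_ae hAe)
    _ = R x A * R x B := setLIntegral_const B (R x A)
    _ = R x B * R x A := mul_comm _ _
    _ = ∫⁻ y in A, R x B ∂(R x) := (setLIntegral_const A (R x B)).symm
    _ = ∫⁻ y in A, R y B ∂(R x) :=
        (lintegral_congr_ae (ae_restrict_of_ae hBe)).symm
end

section
/- If a probability kernel R satisfies a.e. totality with respect to σ(R), then R is reversible with respect to the restriction ν_{σ(R)}: for all D, E ∈ σ(R), ∫_E R_x(D) ν(dx) = ∫_D R_x(E) ν(dx). -/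
open MeasureTheory

theorem stmt13 {X : Type*} [mX : MeasurableSpace X] [StandardBorelSpace X]
    (ν : Measure X) [IsProbabilityMeasure ν]
    (R : X → Measure X) (hRp : ∀ x, IsProbabilityMeasure (R x))
    (hRm : ∀ B : Set X, MeasurableSet B → Measurable fun x => R x B)
    (G : Set X) (hG : (kernelSigma R).MeasurableSet' G) (hνG : ν G = 1)
    (htot : ∀ x ∈ G, R x (atomOf (kernelSigma R) x) = 1) :
    ∀ D E : Set X, (kernelSigma R).MeasurableSet' D → (kernelSigma R).MeasurableSet' E →
      ∫⁻ x in E, R x D ∂ν = ∫⁻ x in D, R x E ∂ν := by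
  have hle : kernelSigma R ≤ mX := by
    apply iSup_le; intro B; apply iSup_le; intro hB
    exact (hRm B hB).comap_le
  -- for x ∈ G and D ∈ σ(R), R x D = indicator of D
  have key : ∀ x ∈ G, ∀ D : Set X, (kernelSigma R).MeasurableSet' D →
      R x D = D.indicator (fun _ => (1 : ENNReal)) x := by
    intro x hx D hD
    by_cases hxD : x ∈ D
    · have hsub : atomOf (kernelSigma R) x ⊆ D := Set.sInter_subset_of_mem ⟨hD, hxD⟩
      have h1 : (1 : ENNReal) ≤ R x D := (htot x hx) ▸ measure_mono hsub
      have h2 : R x D ≤ 1 := haveI := hRp x; prob_le_one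
      simp [Set.indicator_of_mem hxD, le_antisymm h2 h1]
    · have hsub : atomOf (kernelSigma R) x ⊆ Dᶜ :=
        Set.sInter_subset_of_mem ⟨(kernelSigma R).measurableSet_compl D hD, hxD⟩
      have h1 : (1 : ENNReal) ≤ R x Dᶜ := (htot x hx) ▸ measure_mono hsub
      have h2 : R x Dᶜ ≤ 1 := haveI := hRp x; prob_le_one
      have hc : R x Dᶜ = 1 := le_antisymm h2 h1
      have hadd : R x D + R x Dᶜ = 1 := by
        rw [measure_add_measure_compl (hle _ hD), (hRp x).measure_univ]
      rw [hc] at hadd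
      have : R x D = 0 := by
        simpa using ENNReal.eq_sub_of_add_eq ENNReal.one_ne_top hadd
      simp [Set.indicator_of_notMem hxD, this]
  have haeG : ∀ᵐ x ∂ν, x ∈ G := by
    rw [ae_iff]
    have : {x | ¬ x ∈ G} = Gᶜ := rfl
    rw [this, prob_compl_eq_zero_iff (hle _ hG)]
    exact hνG
  have main : ∀ D E : Set X, (kernelSigma R).MeasurableSet' D →
      (kernelSigma R).MeasurableSet' E → ∫⁻ x in E, R x D ∂ν = ν (D ∩ E) := by
    intro D E hD hE
    have hae : ∀ᵐ x ∂ν, R x D = D.indicator (fun _ => (1 : ENNReal)) x := by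
      filter_upwards [haeG] with x hx using key x hx D hD
    calc ∫⁻ x in E, R x D ∂ν
        = ∫⁻ x in E, D.indicator (fun _ => (1 : ENNReal)) x ∂ν :=
          lintegral_congr_ae (ae_restrict_of_ae hae)
      _ = ν (D ∩ E) := by
          have : ∫⁻ x in E, D.indicator (fun _ => (1 : ENNReal)) x ∂ν
              = (ν.restrict E) D := by
            exact lintegral_indicator_one (μ := ν.restrict E) (hle _ hD)
          rw [this, Measure.restrict_apply (hle _ hD)]
  intro D E hD hE
  rw [main D E hD hE, main E D hE hD, Set.inter_comm]
end

section
/- On a countable space X with ν({x}) > 0 for all x, if the kernel R (with entries r_{xy} = R_x({y})) satisfies r_{xy} r_{yz} = r_{xz} r_{zy} for all x, y, z ∈ X, then R is trivial on its atoms: R_x([x]_{σ(R)}) ∈ {0, 1} for every x ∈ X, and moreover R_x([x]_{σ(R)}) > 0 implies R_x([x]_{σ(R)}) = 1. -/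
open MeasureTheory ENNReal

theorem stmt14 {X : Type*} [Countable X] [MeasurableSpace X] [DiscreteMeasurableSpace X]
    (ν : Measure X) [IsProbabilityMeasure ν] (hν : ∀ x : X, 0 < ν {x})
    (R : X → Measure X) (hRp : ∀ x, IsProbabilityMeasure (R x))
    (hSR : ∀ x y z : X, R x {y} * R y {z} = R x {z} * R z {y}) :
    ∀ x : X, (R x {y | R y = R x} = 0 ∨ R x {y | R y = R x} = 1) ∧
      (0 < R x {y | R y = R x} → R x {y | R y = R x} = 1) := by
  intro x
  set A : Set X := {y | R y = R x} with hA
  suffices key : 0 < R x A → R x A = 1 by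
    refine ⟨?_, key⟩
    rcases eq_or_ne (R x A) 0 with h | h
    · exact Or.inl h
    · exact Or.inr (key (pos_iff_ne_zero.mpr h))
  intro hpos
  haveI := hRp x
  -- find y ∈ A with R x {y} ≠ 0
  have hexy : ∃ y ∈ A, R x {y} ≠ 0 := by
    by_contra h
    push_neg at h
    have : R x A = 0 := by
      rw [← Set.biUnion_of_singleton A, measure_biUnion_null_iff A.to_countable]
      exact h
    exact hpos.ne' this
  obtain ⟨y, hyA, hxy⟩ := hexy
  have hRy : R y = R x := hyA
  -- key claim: any z with R x {z} ≠ 0 satisfies R z = R x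
  have claim : ∀ z : X, R x {z} ≠ 0 → R z = R x := by
    intro z hxz
    have hfin : ∀ a b : X, R a {b} ≠ ∞ := fun a b => by
      haveI := hRp a; exact measure_ne_top (R a) {b}
    -- step 1: R z {y} = R x {y}
    have h1 := hSR x y z
    rw [hRy] at h1
    have hzy : R z {y} = R x {y} := by
      rw [mul_comm (R x {y}) (R x {z})] at h1
      exact ((ENNReal.mul_right_inj hxz (hfin x z)).mp h1).symm
    have hzy0 : R z {y} ≠ 0 := hzy ▸ hxy
    -- step 2: for all w, R z {w} = R x {w}
    refine Measure.ext_iff_singleton.mpr fun w => ?_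
    have E2 := hSR z y w
    rw [hRy, hzy] at E2
    -- E2 : R x {y} * R x {w} = R z {w} * R w {y}
    rcases eq_or_ne (R w {y}) 0 with hwy | hwy
    · -- R x {w} = 0 and R z {w} = 0
      rw [hwy, mul_zero] at E2
      have hxw : R x {w} = 0 := by
        rcases mul_eq_zero.mp E2 with h | h
        · exact absurd h hxy
        · exact h
      have E3 := hSR y z w
      rw [hRy, hxw, zero_mul] at E3
      rcases mul_eq_zero.mp E3 with h | h
      · exact absurd h hxz
      · rw [h, hxw]
    · have E1 := hSR x y w
      rw [hRy] at E1
      -- E1 : R x {y} * R x {w} = R x {w} * R w {y}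
      rw [E1, mul_comm (R x {w}) (R w {y}), mul_comm (R z {w}) (R w {y})] at E2
      exact (ENNReal.mul_right_inj hwy (hfin w y)).mp E2.symm
  -- conclude: R x Aᶜ = 0
  have hcompl : R x Aᶜ = 0 := by
    rw [← Set.biUnion_of_singleton Aᶜ, measure_biUnion_null_iff Aᶜ.to_countable]
    intro z hz
    by_contra h
    exact hz (claim z h)
  exact (prob_compl_eq_zero_iff (MeasurableSet.of_discrete)).mp hcompl
end
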